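/- Let n ≥ 1 and consider the Lie algebra gl(2n, ℂ). For 1 ≤ k ≤ n, let Det_k be the determinant of the k×k matrix whose (a,b) entry is the elementary matrix E_{n+a, n-k+b}, viewed as an element of the symmetric algebra S(a₋) where a₋ is the abelian subalgebra spanned by the E_{ij} with i > n and j ≤ n. Then for every X in the subalgebra gl_n^{(1)} ⊕ gl_n^{(2)} (block-diagonal matrices) whose blocks are strictly upper triangular, the adjoint action of X annihilates Det_k, i.e. each Det_k is a singular vector for the adjoint action of gl_n^{(1)} ⊕ gl_n^{(2)} on S(a₋). -/

import Mathlib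

/-
STATEMENT 0: In gl(2n, ℂ), each determinant Det_k (1 ≤ k ≤ n) of the k×k corner
submatrix of matrix units in the lower-left abelian block a₋ is a singular vector
for the adjoint action of gl_n^{(1)} ⊕ gl_n^{(2)} on S(a₋).
We model S(a₋) as the polynomial ring in variables indexed by Fin n × Fin n,
where the variable (i,j) corresponds to the matrix unit E_{n+i, j} (0-indexed).
-/

noncomputable section

/-- The symmetric algebra `S(a₋)`: the variable `(i, j)` corresponds to the matrix
unit `E_{n+i, j}` (0-indexed) spanning the lower-left block `a₋` of `gl(2n, ℂ)`. -/
abbrev SA (n : ℕ) := MvPolynomial (Fin n × Fin n) ℂ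

/-- Embedding of the "first block" index: `j ↦ j`. -/
def lo (n : ℕ) (j : Fin n) : Fin (2 * n) := ⟨j, by have := j.isLt; omega⟩

/-- Embedding of the "second block" index: `i ↦ n + i`. -/
def hi (n : ℕ) (i : Fin n) : Fin (2 * n) := ⟨n + i, by have := i.isLt; omega⟩

/-- The adjoint action of a block-diagonal matrix `A ∈ gl_n^{(1)} ⊕ gl_n^{(2)} ⊆ gl(2n, ℂ)`
on `S(a₋)`, extended as a derivation from
`ad A (E_{n+i,j}) = ∑_{i'} A_{n+i', n+i} E_{n+i', j} - ∑_{j'} A_{j, j'} E_{n+i, j'}`. -/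
def adAct (n : ℕ) (A : Matrix (Fin (2 * n)) (Fin (2 * n)) ℂ) (p : SA n) : SA n :=
  ∑ v : Fin n × Fin n,
    ((∑ i' : Fin n, MvPolynomial.C (A (hi n i') (hi n v.1)) * MvPolynomial.X (i', v.2)) -
      (∑ j' : Fin n, MvPolynomial.C (A (lo n v.2) (lo n j')) * MvPolynomial.X (v.1, j'))) *
      MvPolynomial.pderiv v p

/-- `Det_k`: the determinant of the `k×k` matrix whose `(a,b)` entry is the matrix unit
`E_{n+a, n-k+b}` (here written 0-indexed), viewed in `S(a₋)`. -/
def DetP (n k : ℕ) (hk : k ≤ n) : SA n :=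
  Matrix.det (Matrix.of fun a b : Fin k =>
    MvPolynomial.X (⟨a, by have := a.isLt; omega⟩, ⟨n - k + b, by have := b.isLt; omega⟩))

/-- `A` is block-diagonal with both diagonal blocks strictly upper triangular. -/
def IsStrictUpperBlockDiag (n : ℕ) (A : Matrix (Fin (2 * n)) (Fin (2 * n)) ℂ) : Prop :=
  ∀ p q : Fin (2 * n), A p q ≠ 0 → (p : ℕ) < (q : ℕ) ∧ ((p : ℕ) < n ↔ (q : ℕ) < n)

/-! ### Auxiliary machinery -/

open MvPolynomial Matrix Finset

/-- A first-order differential operator `∑ v, c v * ∂_v` on `S(a₋)`. -/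
def dOp (n : ℕ) (c : Fin n × Fin n → SA n) (p : SA n) : SA n :=
  ∑ v : Fin n × Fin n, c v * MvPolynomial.pderiv v p

lemma dOp_add (n : ℕ) (c : Fin n × Fin n → SA n) (p q : SA n) :
    dOp n c (p + q) = dOp n c p + dOp n c q := by
  simp [dOp, map_add, mul_add, Finset.sum_add_distrib]

lemma dOp_mul (n : ℕ) (c : Fin n × Fin n → SA n) (p q : SA n) :
    dOp n c (p * q) = p * dOp n c q + dOp n c p * q := by
  unfold dOp
  rw [Finset.mul_sum, Finset.sum_mul, ← Finset.sum_add_distrib]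
  refine Finset.sum_congr rfl fun v _ => ?_
  rw [pderiv_mul]; ring

lemma dOp_X (n : ℕ) (c : Fin n × Fin n → SA n) (v : Fin n × Fin n) :
    dOp n c (MvPolynomial.X v) = c v := by
  unfold dOp
  rw [Finset.sum_eq_single v]
  · simp
  · intro w _ hw
    rw [pderiv_X_of_ne (Ne.symm hw), mul_zero]
  · intro h; exact absurd (Finset.mem_univ v) h

/-- Any additive Leibniz operator applied to a determinant expands row by row. -/
theorem deriv_det {R : Type*} [CommRing R] (D : R → R)
    (hadd : ∀ x y, D (x + y) = D x + D y)
    (hmul : ∀ x y, D (x * y) = x * D y + D x * y)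
    {k : ℕ} (M : Matrix (Fin k) (Fin k) R) :
    D M.det = ∑ a : Fin k, (M.updateRow a (fun b => D (M a b))).det := by
  classical
  have hD1 : D 1 = 0 := by
    have h := hmul 1 1
    rw [one_mul, one_mul, mul_one] at h
    exact right_eq_add.mp h
  let D' : R →+ R := AddMonoidHom.mk' D hadd
  have hDint : ∀ m : ℤ, D ((m : ℤ) : R) = 0 := by
    intro m
    have h1 : ((m : ℤ) : R) = m • (1 : R) := by simp [zsmul_eq_mul]
    rw [h1, show D (m • (1 : R)) = D' (m • (1 : R)) from rfl, map_zsmul,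
      show D' (1 : R) = D 1 from rfl, hD1, smul_zero]
  have hprod : ∀ (g : Fin k → R), D (∏ i, g i) =
      ∑ i, (∏ j ∈ Finset.univ.erase i, g j) * D (g i) := by
    intro g
    have key : ∀ (s : Finset (Fin k)), D (∏ i ∈ s, g i) =
        ∑ i ∈ s, (∏ j ∈ s.erase i, g j) * D (g i) := by
      intro s
      induction s using Finset.induction_on with
      | empty => simpa using hD1
      | @insert a s ha ih =>
        rw [Finset.prod_insert ha, hmul, ih, Finset.sum_insert ha, Finset.erase_insert ha,
          Finset.mul_sum, add_comm]
        congr 1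
        · exact mul_comm _ _
        · refine Finset.sum_congr rfl fun i hi => ?_
          rw [Finset.erase_insert_of_ne (fun h => ha (by rw [h]; exact hi)),
            Finset.prod_insert (fun h => ha (Finset.mem_of_mem_erase h))]
          ring
    exact key Finset.univ
  calc D M.det
      = ∑ σ : Equiv.Perm (Fin k),
          D (((Equiv.Perm.sign σ : ℤ) : R) * ∏ i, M (σ i) i) := by
        rw [Matrix.det_apply']; exact map_sum D' _ _
    _ = ∑ σ : Equiv.Perm (Fin k), ((Equiv.Perm.sign σ : ℤ) : R) *
          ∑ i, (∏ j ∈ Finset.univ.erase i, M (σ j) j) * D (M (σ i) i) := by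
        refine Finset.sum_congr rfl fun σ _ => ?_
        rw [hmul, hDint, zero_mul, add_zero, hprod]
    _ = ∑ a : Fin k, (M.updateRow a (fun b => D (M a b))).det := by
        simp only [Matrix.det_apply']
        rw [Finset.sum_comm]
        refine Finset.sum_congr rfl fun σ _ => ?_
        rw [Finset.mul_sum]
        rw [← Equiv.sum_comp (σ : Equiv.Perm (Fin k))
          (fun a => ((Equiv.Perm.sign σ : ℤ) : R) *
            ∏ i, (M.updateRow a (fun b => D (M a b))) (σ i) i)]
        refine Finset.sum_congr rfl fun i₀ _ => ?_
        congr 1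
        rw [← Finset.mul_prod_erase Finset.univ _ (Finset.mem_univ i₀)]
        rw [show (M.updateRow (σ i₀) (fun b => D (M (σ i₀) b))) (σ i₀) i₀
            = D (M (σ i₀) i₀) from congrFun (Matrix.updateRow_self) i₀]
        rw [mul_comm]
        congr 1
        refine Finset.prod_congr rfl fun j hj => ?_
        have hne : σ j ≠ σ i₀ := fun h =>
          (Finset.ne_of_mem_erase hj) (σ.injective h)
        exact (congrFun (Matrix.updateRow_ne hne) j).symm

/-- Determinant is additive over a finite-sum row. -/
lemma det_updateRow_finsum {R : Type*} [CommRing R] {k : ℕ}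
    (M : Matrix (Fin k) (Fin k) R) (a : Fin k) {ι : Type*} [DecidableEq ι]
    (s : Finset ι) (u : ι → Fin k → R) :
    (M.updateRow a (fun b => ∑ i ∈ s, u i b)).det
      = ∑ i ∈ s, (M.updateRow a (u i)).det := by
  induction s using Finset.induction_on with
  | empty =>
    simp only [Finset.sum_empty]
    exact Matrix.det_eq_zero_of_row_eq_zero a
      (fun j => congrFun (Matrix.updateRow_self) j)
  | @insert a' s ha' ih =>
    simp only [Finset.sum_insert ha']
    rw [show (fun b => u a' b + ∑ i ∈ s, u i b)
        = (u a' + fun b => ∑ i ∈ s, u i b) from rfl,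
      Matrix.det_updateRow_add, ih]

/-- Each `Det_k`, `1 ≤ k ≤ n`, is a singular vector for the adjoint action of
`gl_n^{(1)} ⊕ gl_n^{(2)}` on `S(a₋)`. -/
theorem detP_singular (n : ℕ) (hn : 1 ≤ n)
    (A : Matrix (Fin (2 * n)) (Fin (2 * n)) ℂ) (hA : IsStrictUpperBlockDiag n A)
    (k : ℕ) (hk1 : 1 ≤ k) (hk : k ≤ n) :
    adAct n A (DetP n k hk) = 0 := by
  classical
  set c1 : Fin n × Fin n → SA n := fun v =>
    ∑ i' : Fin n, MvPolynomial.C (A (hi n i') (hi n v.1)) * MvPolynomial.X (i', v.2) with hc1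
  set c2 : Fin n × Fin n → SA n := fun v =>
    ∑ j' : Fin n, MvPolynomial.C (A (lo n v.2) (lo n j')) * MvPolynomial.X (v.1, j') with hc2
  have hsplit : ∀ p : SA n, adAct n A p = dOp n c1 p - dOp n c2 p := by
    intro p
    unfold adAct dOp
    rw [← Finset.sum_sub_distrib]
    exact Finset.sum_congr rfl fun v _ => by rw [sub_mul]
  set M : Matrix (Fin k) (Fin k) (SA n) := Matrix.of fun a b : Fin k =>
    MvPolynomial.X (⟨a, by have := a.isLt; omega⟩, ⟨n - k + b, by have := b.isLt; omega⟩)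
    with hM
  have hDet : DetP n k hk = M.det := rfl
  have h1 : dOp n c1 M.det = 0 := by
    rw [deriv_det (dOp n c1) (dOp_add n c1) (dOp_mul n c1)]
    refine Finset.sum_eq_zero fun a _ => ?_
    have ha : (a : ℕ) < n := lt_of_lt_of_le a.isLt hk
    have hrow : (fun b => dOp n c1 (M a b)) = fun b : Fin k =>
        ∑ i' : Fin n, (MvPolynomial.C (A (hi n i') (hi n ⟨a, ha⟩)) *
          MvPolynomial.X (i', ⟨n - k + b, by have := b.isLt; omega⟩) : SA n) := by
      funext b
      rw [show M a b = MvPolynomial.X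
        ((⟨a, ha⟩ : Fin n), (⟨n - k + b, by have := b.isLt; omega⟩ : Fin n)) from rfl, dOp_X]
    rw [hrow, det_updateRow_finsum]
    refine Finset.sum_eq_zero fun i' _ => ?_
    by_cases h0 : A (hi n i') (hi n ⟨a, ha⟩) = 0
    · rw [h0]
      exact Matrix.det_eq_zero_of_row_eq_zero a
        (fun j => by rw [congrFun (Matrix.updateRow_self) j]; simp)
    · have hlt := (hA _ _ h0).1
      have hlt' : (i' : ℕ) < (a : ℕ) := by
        simpa [hi] using hlt
      set a' : Fin k := ⟨i', lt_trans hlt' a.isLt⟩ with ha'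
      have hrow2 : (fun b : Fin k =>
          (MvPolynomial.C (A (hi n i') (hi n ⟨a, ha⟩)) *
            MvPolynomial.X (i', ⟨n - k + b, by have := b.isLt; omega⟩) : SA n))
          = (MvPolynomial.C (A (hi n i') (hi n ⟨a, ha⟩)) : SA n) • (M a') := by
        funext b
        have : M a' b = MvPolynomial.X
            ((i' : Fin n), (⟨n - k + b, by have := b.isLt; omega⟩ : Fin n)) := by
          rfl
        rw [Pi.smul_apply, this, smul_eq_mul]
      rw [hrow2, Matrix.det_updateRow_smul,
        Matrix.det_updateRow_eq_zero (fun h => absurd (congrArg Fin.val h)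
          (by simp [ha']; omega)), mul_zero]
  have h2 : dOp n c2 M.det = 0 := by
    rw [← Matrix.det_transpose M,
      deriv_det (dOp n c2) (dOp_add n c2) (dOp_mul n c2)]
    refine Finset.sum_eq_zero fun b _ => ?_
    have hb : n - k + (b : ℕ) < n := by have := b.isLt; omega
    have hrow : (fun a => dOp n c2 (Mᵀ b a)) = fun a : Fin k =>
        ∑ j' : Fin n, (MvPolynomial.C (A (lo n ⟨n - k + b, hb⟩) (lo n j')) *
          MvPolynomial.X ((⟨a, lt_of_lt_of_le a.isLt hk⟩ : Fin n), j') : SA n) := by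
      funext a
      rw [show Mᵀ b a = MvPolynomial.X
        ((⟨a, lt_of_lt_of_le a.isLt hk⟩ : Fin n), (⟨n - k + b, hb⟩ : Fin n)) from rfl, dOp_X]
    rw [hrow, det_updateRow_finsum]
    refine Finset.sum_eq_zero fun j' _ => ?_
    by_cases h0 : A (lo n ⟨n - k + b, hb⟩) (lo n j') = 0
    · rw [h0]
      exact Matrix.det_eq_zero_of_row_eq_zero b
        (fun j => by rw [congrFun (Matrix.updateRow_self) j]; simp)
    · have hlt := (hA _ _ h0).1
      have hlt' : n - k + (b : ℕ) < (j' : ℕ) := by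
        simpa [lo] using hlt
      have hj'n : (j' : ℕ) < n := j'.isLt
      set b' : Fin k := ⟨(j' : ℕ) - (n - k), by omega⟩ with hb'
      have hrow2 : (fun a : Fin k =>
          (MvPolynomial.C (A (lo n ⟨n - k + b, hb⟩) (lo n j')) *
            MvPolynomial.X ((⟨a, lt_of_lt_of_le a.isLt hk⟩ : Fin n), j') : SA n))
          = (MvPolynomial.C (A (lo n ⟨n - k + b, hb⟩) (lo n j')) : SA n) • (Mᵀ b') := by
        funext a
        have : Mᵀ b' a = MvPolynomial.X
            ((⟨a, lt_of_lt_of_le a.isLt hk⟩ : Fin n), (j' : Fin n)) := by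
          show MvPolynomial.X _ = MvPolynomial.X _
          congr 1
          exact Prod.ext rfl (Fin.ext (by simp [hb']; omega))
        rw [Pi.smul_apply, this, smul_eq_mul]
      rw [hrow2, Matrix.det_updateRow_smul,
        Matrix.det_updateRow_eq_zero (fun h => absurd (congrArg Fin.val h)
          (by simp [hb']; omega)), mul_zero]
  rw [hDet, hsplit M.det, h1, h2, sub_zero]

end
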